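/- Let ψ : ℝ² → ℝ be real-analytic, 1-periodic in each variable, and satisfy the factorisation hypothesis (FH). If there exists a point (x₀,y₀) ∈ ℝ² such that ∂^m_tψ(x₀,y₀) = 0 for every integer m ≥ 2, then ψ(x,y) = ψ(x,y₀) for all (x,y) ∈ ℝ². -/

import Mathlib

/-!
The slice `t ↦ ψ(x₀, t)` is analytic and all its derivatives of order `≥ 2` vanish at `y₀`, so it
is affine, hence constant by periodicity: `u = ∂_t ψ` vanishes on the line `s = x₀`. Near each
point of that line (FH) gives `∂_s u = L ∂_t u`. The functions generated from `u` by `∂_t`, sums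
and products with analytic functions all vanish on the line, and the equation makes this class
stable under `∂_s` (the uniqueness half of Cauchy–Kovalevskaya). Hence every `∂_sⁿ u` vanishes on
the line, `u = 0` by analyticity in `s`, and each slice `ψ(x, ·)` is constant.
-/

open MeasureTheory Filter

/-- mixed partial derivative ∂^{k,ℓ}ψ = ∂^{k+ℓ}ψ/∂s^k∂t^ℓ. -/
noncomputable def pd (ψ : ℝ → ℝ → ℝ) (k l : ℕ) (s t : ℝ) : ℝ :=
  iteratedDeriv k (fun s' => iteratedDeriv l (ψ s') t) s

/-- The factorisation hypothesis (FH) for a scalar function ψ on ℝ²: every point has a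
neighbourhood on which ψ_{st} = K·ψ_{ss} and ψ_{st} = L·ψ_{tt} for analytic K, L. -/
def FH1 (ψ : ℝ → ℝ → ℝ) : Prop :=
  ∀ p : ℝ × ℝ, ∃ U : Set (ℝ × ℝ), IsOpen U ∧ p ∈ U ∧
    ∃ K L : ℝ × ℝ → ℝ,
      (∀ q ∈ U, AnalyticAt ℝ K q) ∧ (∀ q ∈ U, AnalyticAt ℝ L q) ∧
      ∀ q ∈ U, pd ψ 1 1 q.1 q.2 = K q * pd ψ 2 0 q.1 q.2 ∧
               pd ψ 1 1 q.1 q.2 = L q * pd ψ 0 2 q.1 q.2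

open Topology Set

section DirDeriv

variable {E F : Type*} [NormedAddCommGroup E] [NormedSpace ℝ E]
  [NormedAddCommGroup F] [NormedSpace ℝ F]

noncomputable def dirDeriv (v : E) (f : E → F) : E → F := fun x => fderiv ℝ f x v

theorem AnalyticAt.dirDeriv [CompleteSpace F] {f : E → F} {x : E} (hf : AnalyticAt ℝ f x)
    (v : E) : AnalyticAt ℝ (dirDeriv v f) x :=
  ((ContinuousLinearMap.apply ℝ F v).analyticAt _).comp hf.fderiv

theorem analyticAt_iterate_dirDeriv [CompleteSpace F] {f : E → F} (hf : ∀ x, AnalyticAt ℝ f x)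
    (v : E) (n : ℕ) (x : E) : AnalyticAt ℝ ((dirDeriv v)^[n] f) x := by
  induction n generalizing x with
  | zero => exact hf x
  | succ n ih =>
    rw [Function.iterate_succ_apply']
    exact (ih x).dirDeriv v

theorem Filter.EventuallyEq.dirDeriv_eq {f g : E → F} {x : E} (h : f =ᶠ[𝓝 x] g) (v : E) :
    dirDeriv v f x = dirDeriv v g x := by
  simp only [dirDeriv, h.fderiv_eq]

theorem dirDeriv_comm [CompleteSpace F] {f : E → F} {x : E} (hf : AnalyticAt ℝ f x) (v w : E) :
    dirDeriv v (dirDeriv w f) x = dirDeriv w (dirDeriv v f) x := by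
  have hsnd : ∀ a b : E, dirDeriv a (dirDeriv b f) x = fderiv ℝ (fderiv ℝ f) x a b := by
    intro a b
    change fderiv ℝ (fun y => fderiv ℝ f y b) x a = _
    rw [fderiv_clm_apply hf.fderiv.differentiableAt (differentiableAt_const b)]
    simp
  rw [hsnd, hsnd]
  exact (hf.contDiffAt (n := 2)).isSymmSndFDerivAt (by simp) v w

theorem hasDerivAt_comp_line {f : E → F} {x v : E} {τ : ℝ}
    (hf : DifferentiableAt ℝ f (x + τ • v)) :
    HasDerivAt (fun σ : ℝ => f (x + σ • v)) (dirDeriv v f (x + τ • v)) τ := by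
  simpa [dirDeriv, Function.comp_def] using
    hf.hasFDerivAt.comp_hasDerivAt τ (((hasDerivAt_id τ).smul_const v).const_add x)

theorem iteratedDeriv_comp_line [CompleteSpace F] {f : E → F} (hf : ∀ x, AnalyticAt ℝ f x)
    (x v : E) (n : ℕ) :
    iteratedDeriv n (fun τ : ℝ => f (x + τ • v)) = fun τ => (dirDeriv v)^[n] f (x + τ • v) := by
  induction n with
  | zero => rfl
  | succ n ih =>
    ext τ
    rw [iteratedDeriv_succ, ih, Function.iterate_succ_apply']
    exact (hasDerivAt_comp_line (analyticAt_iterate_dirDeriv hf v n _).differentiableAt).deriv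

theorem iteratedDeriv_comp_prodMk_left [CompleteSpace F] {f : ℝ × ℝ → F}
    (hf : ∀ x, AnalyticAt ℝ f x) (n : ℕ) (s t : ℝ) :
    iteratedDeriv n (fun s' => f (s', t)) s = (dirDeriv (1, 0))^[n] f (s, t) := by
  simpa using congrFun (iteratedDeriv_comp_line hf (0, t) (1, 0) n) s

theorem iteratedDeriv_comp_prodMk_right [CompleteSpace F] {f : ℝ × ℝ → F}
    (hf : ∀ x, AnalyticAt ℝ f x) (n : ℕ) (s t : ℝ) :
    iteratedDeriv n (fun t' => f (s, t')) t = (dirDeriv (0, 1))^[n] f (s, t) := by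
  simpa using congrFun (iteratedDeriv_comp_line hf (s, 0) (0, 1) n) t

theorem dirDeriv_mul {f g : E → ℝ} {x : E} (hf : DifferentiableAt ℝ f x)
    (hg : DifferentiableAt ℝ g x) (v : E) :
    dirDeriv v (f * g) x = dirDeriv v f x * g x + f x * dirDeriv v g x := by
  simp only [dirDeriv, fderiv_mul hf hg, add_apply, smul_apply, smul_eq_mul]
  ring

theorem dirDeriv_add {f g : E → F} {x : E} (hf : DifferentiableAt ℝ f x)
    (hg : DifferentiableAt ℝ g x) (v : E) :
    dirDeriv v (f + g) x = dirDeriv v f x + dirDeriv v g x := by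
  simp [dirDeriv, fderiv_add hf hg]

end DirDeriv

section DerivClosure

variable {E : Type*} [NormedAddCommGroup E] [NormedSpace ℝ E]

inductive DerivClosure (U : Set E) (v : E) (u : E → ℝ) : (E → ℝ) → Prop
  | base : DerivClosure U v u u
  | deriv {f : E → ℝ} : DerivClosure U v u f → DerivClosure U v u (dirDeriv v f)
  | mul {A f : E → ℝ} : AnalyticOnNhd ℝ A U → DerivClosure U v u f → DerivClosure U v u (A * f)
  | add {f g : E → ℝ} : DerivClosure U v u f → DerivClosure U v u g → DerivClosure U v u (f + g)

namespace DerivClosure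

variable {U : Set E} {v : E} {u f : E → ℝ}

theorem analyticOnNhd (hu : AnalyticOnNhd ℝ u U) (hf : DerivClosure U v u f) :
    AnalyticOnNhd ℝ f U := by
  induction hf with
  | base => exact hu
  | deriv _ ih => exact fun x hx => (ih x hx).dirDeriv v
  | mul hA _ ih => exact fun x hx => (hA x hx).mul (ih x hx)
  | add _ _ ih₁ ih₂ => exact fun x hx => (ih₁ x hx).add (ih₂ x hx)

theorem eq_zero_on_line (hU : IsOpen U) (hu : AnalyticOnNhd ℝ u U) {x : E}
    (hline : ∀ τ : ℝ, x + τ • v ∈ U → u (x + τ • v) = 0) (hf : DerivClosure U v u f) :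
    ∀ τ : ℝ, x + τ • v ∈ U → f (x + τ • v) = 0 := by
  induction hf with
  | base => exact hline
  | @deriv f hf ih =>
    intro τ hτ
    have hopen : IsOpen {σ : ℝ | x + σ • v ∈ U} :=
      hU.preimage (continuous_const.add (continuous_id.smul continuous_const))
    have hzero : (fun σ : ℝ => f (x + σ • v)) =ᶠ[𝓝 τ] fun _ => 0 :=
      eventually_of_mem (hopen.mem_nhds hτ) ih
    rw [← (hasDerivAt_comp_line ((hf.analyticOnNhd hu _ hτ).differentiableAt)).deriv,
      hzero.deriv_eq, deriv_const]
  | mul _ _ ih => exact fun τ hτ => by simp [ih τ hτ]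
  | add _ _ ih₁ ih₂ => exact fun τ hτ => by simp [ih₁ τ hτ, ih₂ τ hτ]

variable {w : E} {L : E → ℝ}

theorem exists_eqOn_dirDeriv (hU : IsOpen U) (hu : AnalyticOnNhd ℝ u U)
    (hL : AnalyticOnNhd ℝ L U) (hpde : EqOn (dirDeriv w u) (L * dirDeriv v u) U)
    (hf : DerivClosure U v u f) : ∃ g, DerivClosure U v u g ∧ EqOn (dirDeriv w f) g U := by
  induction hf with
  | base => exact ⟨_, mul hL (deriv base), hpde⟩
  | @deriv f hf ih =>
    obtain ⟨g, hg, hfg⟩ := ih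
    refine ⟨dirDeriv v g, hg.deriv, fun x hx => ?_⟩
    rw [dirDeriv_comm (hf.analyticOnNhd hu x hx)]
    exact (eventuallyEq_of_mem (hU.mem_nhds hx) hfg).dirDeriv_eq v
  | @mul A f hA hf ih =>
    obtain ⟨g, hg, hfg⟩ := ih
    refine ⟨dirDeriv w A * f + A * g, add (mul (fun x hx => (hA x hx).dirDeriv w) hf) (mul hA hg),
      fun x hx => ?_⟩
    rw [dirDeriv_mul (hA x hx).differentiableAt (hf.analyticOnNhd hu x hx).differentiableAt,
      hfg hx]
    rfl
  | @add f₁ f₂ hf₁ hf₂ ih₁ ih₂ =>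
    obtain ⟨g₁, hg₁, hfg₁⟩ := ih₁
    obtain ⟨g₂, hg₂, hfg₂⟩ := ih₂
    refine ⟨g₁ + g₂, add hg₁ hg₂, fun x hx => ?_⟩
    rw [dirDeriv_add (hf₁.analyticOnNhd hu x hx).differentiableAt
      (hf₂.analyticOnNhd hu x hx).differentiableAt, hfg₁ hx, hfg₂ hx]
    rfl

end DerivClosure

theorem iterate_dirDeriv_eq_zero_of_eq_zero_on_line {U : Set E} {u L : E → ℝ} {v w x : E}
    (hU : IsOpen U) (hu : AnalyticOnNhd ℝ u U) (hL : AnalyticOnNhd ℝ L U)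
    (hpde : EqOn (dirDeriv w u) (L * dirDeriv v u) U)
    (hline : ∀ τ : ℝ, x + τ • v ∈ U → u (x + τ • v) = 0) (n : ℕ) {τ : ℝ} (hτ : x + τ • v ∈ U) :
    (dirDeriv w)^[n] u (x + τ • v) = 0 := by
  have hclosure : ∃ g, DerivClosure U v u g ∧ EqOn ((dirDeriv w)^[n] u) g U := by
    induction n with
    | zero => exact ⟨u, .base, eqOn_refl _ _⟩
    | succ n ih =>
      obtain ⟨g, hg, hng⟩ := ih
      obtain ⟨g', hg', hgg'⟩ := hg.exists_eqOn_dirDeriv hU hu hL hpde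
      refine ⟨g', hg', fun y hy => ?_⟩
      rw [Function.iterate_succ_apply', ← hgg' hy]
      exact (eventuallyEq_of_mem (hU.mem_nhds hy) hng).dirDeriv_eq w
  obtain ⟨g, hg, hng⟩ := hclosure
  rw [hng hτ]
  exact hg.eq_zero_on_line hU hu hline τ hτ

end DerivClosure

theorem eq_zero_of_forall_iteratedDeriv_eq_zero {𝕜 F : Type*} [NontriviallyNormedField 𝕜]
    [CharZero 𝕜] [PreconnectedSpace 𝕜] [NormedAddCommGroup F] [NormedSpace 𝕜 F] [CompleteSpace F]
    {f : 𝕜 → F} (hf : ∀ z, AnalyticAt 𝕜 f z) {z₀ : 𝕜} (h : ∀ n, iteratedDeriv n f z₀ = 0) :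
    f = 0 := by
  refine (AnalyticOnNhd.analyticOrderAt_eq_top_iff_eq_zero z₀ hf).1
    (ENat.eq_top_iff_forall_ge.2 fun n => ?_)
  exact (natCast_le_analyticOrderAt_iff_iteratedDeriv_eq_zero (hf z₀)).2 fun i _ => h i

theorem Function.Periodic.eq_zero_of_hasDerivAt_const {g : ℝ → ℝ} {c a : ℝ} (hg : g.Periodic c)
    (hc : c ≠ 0) (hderiv : ∀ t, HasDerivAt g a t) : a = 0 := by
  have hlin : ∀ t, HasDerivAt (fun t => g t - a * t) 0 t := fun t => by
    simpa using (hderiv t).fun_sub ((hasDerivAt_id t).const_mul a)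
  have hconst := is_const_of_deriv_eq_zero (fun t => (hlin t).differentiableAt)
    (fun t => (hlin t).deriv) c 0
  have hac : a * c = 0 := by linarith [hg.eq]
  exact (mul_eq_zero.1 hac).resolve_right hc

theorem Function.Periodic.deriv_eq_zero_of_iteratedDeriv_eq_zero {g : ℝ → ℝ}
    (hg : ∀ t, AnalyticAt ℝ g t) {c : ℝ} (hper : g.Periodic c) (hc : c ≠ 0) {t₀ : ℝ}
    (h : ∀ m, 2 ≤ m → iteratedDeriv m g t₀ = 0) : deriv g = 0 := by
  have hg'' : deriv (deriv g) = 0 := by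
    refine eq_zero_of_forall_iteratedDeriv_eq_zero (fun t => (hg t).deriv.deriv) (z₀ := t₀)
      fun n => ?_
    rw [← iteratedDeriv_succ', ← iteratedDeriv_succ']
    exact h (n + 2) (by omega)
  have hg' : ∀ t, deriv g t = deriv g t₀ := fun t =>
    is_const_of_deriv_eq_zero (fun t => (hg t).deriv.differentiableAt) (congrFun hg'') t t₀
  have ha := hper.eq_zero_of_hasDerivAt_const hc fun t => by
    simpa [hg' t] using (hg t).differentiableAt.hasDerivAt
  ext t
  rw [hg' t, ha, Pi.zero_apply]

theorem pd_eq_iterate_dirDeriv {ψ : ℝ → ℝ → ℝ}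
    (hψ : ∀ p : ℝ × ℝ, AnalyticAt ℝ (fun q : ℝ × ℝ => ψ q.1 q.2) p) (k l : ℕ) (s t : ℝ) :
    pd ψ k l s t =
      (dirDeriv (1, 0))^[k] ((dirDeriv (0, 1))^[l] fun q : ℝ × ℝ => ψ q.1 q.2) (s, t) := by
  have hinner : (fun s' => iteratedDeriv l (ψ s') t) =
      fun s' => (dirDeriv (0, 1))^[l] (fun q : ℝ × ℝ => ψ q.1 q.2) (s', t) :=
    funext fun s' => iteratedDeriv_comp_prodMk_right hψ l s' t
  rw [pd, hinner, iteratedDeriv_comp_prodMk_left (analyticAt_iterate_dirDeriv hψ _ l)]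

theorem stmt7_general (ψ : ℝ → ℝ → ℝ)
    (hψa : ∀ p : ℝ × ℝ, AnalyticAt ℝ (fun q : ℝ × ℝ => ψ q.1 q.2) p)
    (hp2 : ∀ s t : ℝ, ψ s (t + 1) = ψ s t)
    (hFH : FH1 ψ)
    (x₀ y₀ : ℝ)
    (hzero : ∀ m : ℕ, 2 ≤ m → pd ψ 0 m x₀ y₀ = 0) :
    ∀ x y : ℝ, ψ x y = ψ x y₀ := by
  set u := dirDeriv (0, 1) fun q : ℝ × ℝ => ψ q.1 q.2
  have hu : ∀ p, AnalyticAt ℝ u p := fun p => (hψa p).dirDeriv _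
  have hψu : ∀ s t, deriv (ψ s) t = u (s, t) := fun s t => by
    simpa using iteratedDeriv_comp_prodMk_right hψa 1 s t
  have hline : ∀ t, u (x₀, t) = 0 := fun t => by
    rw [← hψu, Function.Periodic.deriv_eq_zero_of_iteratedDeriv_eq_zero
      (fun t => (hψa (x₀, t)).curry_right) (hp2 x₀) one_ne_zero (t₀ := y₀)
      (fun m hm => by simpa [pd] using hzero m hm), Pi.zero_apply]
  have hu_zero : ∀ s t, u (s, t) = 0 := fun s t => by
    obtain ⟨U, hU, hmem, _, L, -, hL, hKL⟩ := hFH (x₀, t)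
    have hpde : EqOn (dirDeriv (1, 0) u) (L * dirDeriv (0, 1) u) U := fun q hq => by
      simpa [pd_eq_iterate_dirDeriv hψa] using (hKL q hq).2
    have hderiv : ∀ n, iteratedDeriv n (fun s' => u (s', t)) x₀ = 0 := fun n => by
      rw [iteratedDeriv_comp_prodMk_left hu]
      simpa using iterate_dirDeriv_eq_zero_of_eq_zero_on_line hU (fun q _ => hu q) hL hpde
        (x := (x₀, 0)) (fun τ _ => by simpa using hline τ) n (τ := t) (by simpa using hmem)
    exact congrFun
      (eq_zero_of_forall_iteratedDeriv_eq_zero (fun s' => (hu (s', t)).curry_left) hderiv) s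
  intro x y
  exact is_const_of_deriv_eq_zero (fun t => (hψa (x, t)).curry_right.differentiableAt)
    (fun t => (hψu x t).trans (hu_zero x t)) y y₀

/-- Degeneracy under (FH): if all pure t-derivatives of order ≥ 2 vanish at one point,
then ψ(x,y) = ψ(x,y₀) identically. -/
theorem stmt7 (ψ : ℝ → ℝ → ℝ)
    (hψa : ∀ p : ℝ × ℝ, AnalyticAt ℝ (fun q : ℝ × ℝ => ψ q.1 q.2) p)
    (hp1 : ∀ s t : ℝ, ψ (s + 1) t = ψ s t)
    (hp2 : ∀ s t : ℝ, ψ s (t + 1) = ψ s t)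
    (hFH : FH1 ψ)
    (x₀ y₀ : ℝ)
    (hzero : ∀ m : ℕ, 2 ≤ m → pd ψ 0 m x₀ y₀ = 0) :
    ∀ x y : ℝ, ψ x y = ψ x y₀ :=
  stmt7_general ψ hψa hp2 hFH x₀ y₀ hzero
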